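/- arXiv:2306.10009 — 2 statements merged into one kernel-verified Lean document; each statement's English description precedes it below -/
import Mathlib

section
/- Let G = ⟨N, E, L, root⟩ be an egraph, rep an admissible representative function for G, and M a Σ-structure (interpreting variables as fresh constants) such that for all nodes n, n' with root(n) = root(n'), the terms term(n) and term(n') have the same value in M. Then for every node n ∈ N, the terms term(n) and toexpr(n, rep) have the same value in M. -/
inductive Term (Sym Var : Type) : Type where
  | var : Var → Term Sym Var
  | app : Sym → List (Term Sym Var) → Term Sym Var

namespace Term

inductive HasVar {Sym Var : Type} (v : Var) : Term Sym Var → Prop where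
  | var : HasVar v (Term.var v)
  | app {f : Sym} {args : List (Term Sym Var)} {t : Term Sym Var} :
      t ∈ args → HasVar v t → HasVar v (Term.app f args)

/-- A term is ground if it contains no variables. -/
def Ground {Sym Var : Type} (t : Term Sym Var) : Prop := ∀ v : Var, ¬ HasVar v t

/-- `ImmSub s t` : `s` is an immediate subterm of `t`. -/
def ImmSub {Sym Var : Type} (s t : Term Sym Var) : Prop :=
  ∃ (f : Sym) (args : List (Term Sym Var)), t = Term.app f args ∧ s ∈ args

/-- Evaluation of a term in a Σ-structure with domain `D`, interpretation `I` of
function symbols, and valuation `ρ` of the variables (treated as fresh constants). -/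
def eval {Sym Var D : Type} (I : Sym → List D → D) (ρ : Var → D) : Term Sym Var → D
  | .var v => ρ v
  | .app f args => I f (args.attach.map fun t => eval I ρ t.1)
  termination_by t => sizeOf t
  decreasing_by
    have := List.sizeOf_lt_of_mem t.2
    simp only [Term.app.sizeOf_spec]
    omega

/-- Height of a term: leaves have height 1; a non-leaf has height one more than the
maximum height of its immediate subterms. -/
def height {Sym Var : Type} : Term Sym Var → ℕ
  | .var _ => 1
  | .app _ args => 1 + (args.attach.map fun t => height t.1).foldr max 0
  termination_by t => sizeOf t
  decreasing_by
    have := List.sizeOf_lt_of_mem t.2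
    simp only [Term.app.sizeOf_spec]
    omega

end Term

/-- An egraph over a functional signature `Sym` with variables `Var`. -/
structure EGraph (Sym Var : Type) where
  N : Type
  finN : Finite N
  children : N → List N
  label : N → Sym ⊕ Var
  root : N → N
  /-- `⟨N, E⟩` is a DAG. -/
  dag : ∀ n : N, ¬ Relation.TransGen (fun a b : N => a ∈ children b) n n
  /-- only leaves may be labeled by variables. -/
  varLeaf : ∀ (n : N) (v : Var), label n = Sum.inr v → children n = []
  /-- `ρ_root` is closed under congruence. -/
  congrClosed : ∀ n n' : N, label n = label n' → children n ≠ [] →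
    List.Forall₂ (fun a b => root a = root b) (children n) (children n') →
    root n = root n'

theorem wf_of_acyclic {α : Type} [Finite α] {r : α → α → Prop}
    (h : ∀ a, ¬ Relation.TransGen r a a) : WellFounded r := by
  have htg : WellFounded (Relation.TransGen r) := by
    haveI : IsIrrefl α (Relation.TransGen r) := ⟨h⟩
    haveI : IsTrans α (Relation.TransGen r) :=
      ⟨fun _ _ _ hab hbc => Relation.TransGen.trans hab hbc⟩
    exact Finite.wellFounded_of_trans_of_irrefl _
  exact Subrelation.wf (fun {a b} hab => Relation.TransGen.single hab) htg

namespace EGraph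

variable {Sym Var : Type}

/-- The term of a node. -/
noncomputable def term (G : EGraph Sym Var) : G.N → Term Sym Var :=
  haveI := G.finN
  (wf_of_acyclic G.dag).fix fun n rec =>
    match G.label n with
    | Sum.inr v => Term.var v
    | Sum.inl f => Term.app f ((G.children n).attach.map fun c => rec c.1 c.2)

/-- The edge relation of the graph `G_rep`: `repEdge G rep n m` iff `m = rep c`
for some child `c` of `n`. -/
def repEdge (G : EGraph Sym Var) (rep : G.N → G.N) (n m : G.N) : Prop :=
  ∃ c ∈ G.children n, m = rep c

/-- An admissible representative function: (a) one representative per class,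
(b) `ρ_rep = ρ_root`, (c) `G_rep` is acyclic. -/
structure Admissible (G : EGraph Sym Var) (rep : G.N → G.N) : Prop where
  rep_mem : ∀ n, G.root (rep n) = G.root n
  rep_class : ∀ n n', G.root n = G.root n' ↔ rep n = rep n'
  acyclic : ∀ n, ¬ Relation.TransGen (G.repEdge rep) n n

/-- Extraction of the term of a node relative to an admissible representative
function, by well-founded recursion on `G_rep`. -/
noncomputable def toexpr (G : EGraph Sym Var) (rep : G.N → G.N)
    (h : G.Admissible rep) : G.N → Term Sym Var :=
  haveI := G.finN
  (wf_of_acyclic (r := Function.swap (G.repEdge rep))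
      (fun a hta => h.acyclic a hta.swap)).fix
    fun n rec =>
      match G.label n with
      | Sum.inr v => Term.var v
      | Sum.inl f =>
          Term.app f ((G.children n).attach.map fun c => rec (rep c.1) ⟨c.1, c.2, rfl⟩)

/-- Satisfaction of `toformula(rep, S)` in a Σ-structure: all its equality literals
`toexpr(rep n) ≐ toexpr(n)` (for `n ∉ S` not a representative) hold. -/
def SatFormula {D : Type} (G : EGraph Sym Var) (rep : G.N → G.N) (h : G.Admissible rep)
    (S : Set G.N) (I : Sym → List D → D) (ρ : Var → D) : Prop :=
  ∀ n, n ≠ rep n → n ∉ S →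
    Term.eval I ρ (G.toexpr rep h (rep n)) = Term.eval I ρ (G.toexpr rep h n)

/-- The variable `v` occurs in the formula `toformula(rep, S)`. -/
def OccursIn (G : EGraph Sym Var) (rep : G.N → G.N) (h : G.Admissible rep)
    (S : Set G.N) (v : Var) : Prop :=
  ∃ n, n ≠ rep n ∧ n ∉ S ∧
    ((G.toexpr rep h (rep n)).HasVar v ∨ (G.toexpr rep h n).HasVar v)

/-- Constructively ground nodes. -/
inductive CGround (G : EGraph Sym Var) : G.N → Prop where
  | ground {n : G.N} : (G.term n).Ground → CGround G n
  | app {n : G.N} (w : (c : G.N) → c ∈ G.children n → G.N) :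
      G.children n ≠ [] →
      (∀ c hc, G.root (w c hc) = G.root c) →
      (∀ c hc, CGround G (w c hc)) →
      CGround G n

/-- A class is ground if it contains a c-ground node. -/
def GroundClass (G : EGraph Sym Var) (n : G.N) : Prop :=
  ∃ m, G.root m = G.root n ∧ G.CGround m

/-- A representative function is maximally ground if representatives of ground
classes are c-ground. -/
def MaxGround (G : EGraph Sym Var) (rep : G.N → G.N) : Prop :=
  ∀ n, G.GroundClass n → G.CGround (rep n)

/-- Edge relation of the graph `⟨N, E_r⟩` for a partial representative function. -/
def pEdge (G : EGraph Sym Var) (r : G.N → Option G.N) (n m : G.N) : Prop :=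
  ∃ c ∈ G.children n, r c = some m

/-- Admissible partial representative functions. -/
structure PAdmissible (G : EGraph Sym Var) (r : G.N → Option G.N) : Prop where
  classCond : ∀ n : G.N, r n ≠ none → ∀ m : G.N, (G.root m = G.root n ↔ r m = r n)
  acyclic : ∀ n, ¬ Relation.TransGen (G.pEdge r) n n
  defined_children : ∀ n m : G.N, r m = some n → ∀ c ∈ G.children n, r c ≠ none

/-- Class frontiers of a node. -/
inductive CFrontier (G : EGraph Sym Var) (n : G.N) : Set G.N → Prop where
  | base : CFrontier G n {c | c ∈ G.children n}
  | classSwap {Fr : Set G.N} {m c : G.N} : CFrontier G n Fr → m ∈ Fr →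
      G.root c = G.root m → CFrontier G n ((Fr ∪ {c}) \ {m})
  | expand {Fr : Set G.N} {m : G.N} : CFrontier G n Fr → m ∈ Fr →
      G.children m ≠ [] → CFrontier G n ((Fr ∪ {c | c ∈ G.children m}) \ {m})

end EGraph

theorem EGraph.term_eq {Sym Var : Type} (G : EGraph Sym Var) (n : G.N) :
    G.term n = match G.label n with
      | Sum.inr v => Term.var v
      | Sum.inl f => Term.app f ((G.children n).attach.map fun c => G.term c.1) := by
  haveI := G.finN
  unfold EGraph.term
  exact WellFounded.fix_eq _ _ n

theorem EGraph.toexpr_eq {Sym Var : Type} (G : EGraph Sym Var) (rep : G.N → G.N)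
    (h : G.Admissible rep) (n : G.N) :
    G.toexpr rep h n = match G.label n with
      | Sum.inr v => Term.var v
      | Sum.inl f => Term.app f ((G.children n).attach.map fun c => G.toexpr rep h (rep c.1)) := by
  haveI := G.finN
  unfold EGraph.toexpr
  exact WellFounded.fix_eq _ _ n

/-- in any Σ-structure identifying the terms of root-equal nodes,
`term(n)` and `toexpr(n, rep)` have the same value, for every node `n`. -/
theorem eval_term_eq_eval_toexpr {Sym Var D : Type} (G : EGraph Sym Var)
    (rep : G.N → G.N) (h : G.Admissible rep)
    (I : Sym → List D → D) (ρ : Var → D)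
    (hM : ∀ n n' : G.N, G.root n = G.root n' →
      Term.eval I ρ (G.term n) = Term.eval I ρ (G.term n')) :
    ∀ n : G.N, Term.eval I ρ (G.term n) = Term.eval I ρ (G.toexpr rep h n) := by
  haveI := G.finN
  have wf : WellFounded (Function.swap (G.repEdge rep)) :=
    wf_of_acyclic (fun a hta => h.acyclic a hta.swap)
  intro n
  induction n using wf.induction with
  | _ n ih =>
  rw [G.term_eq n, G.toexpr_eq rep h n]
  cases hl : G.label n with
  | inr v => simp
  | inl f =>
    simp only [Term.eval]
    congr 1
    simp only [List.map_attach_eq_pmap, List.map_map, List.pmap_eq_map]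
    apply List.map_congr_left
    intro c hc
    simp only [Function.comp_apply]
    have h1 : Term.eval I ρ (G.term (rep c)) = Term.eval I ρ (G.toexpr rep h (rep c)) :=
      ih (rep c) ⟨c, hc, rfl⟩
    have h2 := hM c (rep c) (h.rep_mem c).symm
    rw [h2, h1]
end

section
/- Let G = ⟨N, E, L, root⟩ be an egraph, rep an admissible representative function for G, and ψ = toformula(rep, ∅). Then for every node n ∈ N, ψ entails the equality term(n) ≐ toexpr(n, rep): every Σ-structure satisfying all literals of ψ assigns term(n) and toexpr(n, rep) the same value. -/
theorem term_unfold {Sym Var : Type} (G : EGraph Sym Var) (n : G.N) :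
    G.term n = (match G.label n with
      | Sum.inr v => Term.var v
      | Sum.inl f => Term.app f ((G.children n).attach.map fun c => G.term c.1)) := by
  haveI := G.finN
  exact WellFounded.fix_eq _ _ n

theorem toexpr_unfold {Sym Var : Type} (G : EGraph Sym Var) (rep : G.N → G.N)
    (h : G.Admissible rep) (n : G.N) :
    G.toexpr rep h n = (match G.label n with
      | Sum.inr v => Term.var v
      | Sum.inl f =>
          Term.app f ((G.children n).attach.map fun c => G.toexpr rep h (rep c.1))) := by
  haveI := G.finN
  exact WellFounded.fix_eq _ _ n

theorem eval_app {Sym Var D : Type} (I : Sym → List D → D) (ρ : Var → D)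
    (f : Sym) (args : List (Term Sym Var)) :
    Term.eval I ρ (Term.app f args) = I f (args.map (Term.eval I ρ)) := by
  rw [Term.eval]
  simp [List.attach_map_val]

/-- `ψ = toformula(rep, ∅)` entails `term(n) ≐ toexpr(n, rep)` for
every node `n`: every Σ-structure satisfying all literals of `ψ` assigns them the
same value. -/
theorem toformula_entails_term_eq_toexpr {Sym Var : Type} (G : EGraph Sym Var)
    (rep : G.N → G.N) (h : G.Admissible rep) :
    ∀ (D : Type) (I : Sym → List D → D) (ρ : Var → D),
      G.SatFormula rep h (∅ : Set G.N) I ρ →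
      ∀ n : G.N, Term.eval I ρ (G.term n) = Term.eval I ρ (G.toexpr rep h n) := by
  intro D I ρ hsat n
  haveI := G.finN
  induction n using (wf_of_acyclic G.dag).induction with
  | _ n IH =>
    rw [term_unfold, toexpr_unfold]
    cases hl : G.label n with
    | inr v => simp
    | inl f =>
      simp only
      rw [eval_app, eval_app]
      congr 1
      rw [List.map_map, List.map_map]
      apply List.map_congr_left
      rintro ⟨c, hc⟩ -
      simp only [Function.comp]
      rw [IH c hc]
      by_cases hrc : c = rep c
      · rw [← hrc]
      · exact (hsat c hrc (Set.notMem_empty c)).symm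
end
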